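/- For the cycle C_n with n ≥ 4, the number of partitions into exactly 4 independent sets is S(C_n, 4) = (3^n - 4·2^n + (-1)^n + 6)/24. -/

import Mathlib

open Finset SimpleGraph Polynomial

/-- Stirling numbers of the second kind. -/
def stirling2 : ℕ → ℕ → ℕ
  | 0, 0 => 1
  | 0, _ + 1 => 0
  | _ + 1, 0 => 0
  | n + 1, k + 1 => (k + 1) * stirling2 n (k + 1) + stirling2 n k

/-- Bell numbers. -/
def bell (n : ℕ) : ℕ := ∑ k ∈ Finset.range (n + 1), stirling2 n k

/-- `graphStirling G k` is the number of partitions of the vertex set of `G`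
into exactly `k` non-empty independent sets. -/
noncomputable def graphStirling {V : Type} [Fintype V] [DecidableEq V] (G : SimpleGraph V) (k : ℕ) : ℕ :=
  Nat.card {P : Finpartition (Finset.univ : Finset V) //
    P.parts.card = k ∧ ∀ p ∈ P.parts, ∀ u ∈ p, ∀ v ∈ p, ¬ G.Adj u v}

/-- The number of proper colorings of `G` with `x` colors
(the chromatic polynomial evaluated at `x`). -/
noncomputable def chromaticCount {V : Type} [Fintype V] (G : SimpleGraph V) (x : ℕ) : ℕ :=
  Nat.card {f : V → Fin x // ∀ u v, G.Adj u v → f u ≠ f v}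

/-!
A proper `x`-colouring of `G` is the same as a partition of `V` into independent sets (the
colour classes) together with an injective colouring of the parts, so the number of proper
`x`-colourings is `∑ₖ S(G, k) · x(x-1)⋯(x-k+1)`.

A proper `x`-colouring of `Cₙ` is a closed walk of length `n` in the complete graph `Kₓ`; these
are counted by `tr Aⁿ` for `A = J - I`, and since `A² = (x-2)A + (x-1)I` this trace is
`(x-1)ⁿ + (-1)ⁿ(x-1)`. Evaluating both expressions at `x = 0, 1, 2, 3, 4`, where the falling
factorials vanish for `k > x`, gives a triangular linear system for `S(Cₙ, 0), …, S(Cₙ, 4)`.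
-/

lemma Fintype.card_subtype_eq_sum_card_fiber {β γ : Type*} [Fintype β] [Fintype γ]
    [DecidableEq γ] (p : β → Prop) [DecidablePred p] (φ : β → γ) :
    Fintype.card {b // p b} = ∑ c, Fintype.card {b // p b ∧ φ b = c} := by
  simp only [Fintype.card_subtype]
  rw [card_eq_sum_card_fiberwise (f := φ) (t := univ) (fun _ _ => mem_coe.2 (mem_univ _))]
  simp only [filter_filter]

namespace Finpartition

variable {α : Type*} [DecidableEq α] {s : Finset α}

lemma ext_part {P Q : Finpartition s} (h : ∀ a, P.part a = Q.part a) : P = Q := by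
  have parts_subset : ∀ P Q : Finpartition s, (∀ a, P.part a = Q.part a) → P.parts ⊆ Q.parts := by
    intro P Q h p hp
    obtain ⟨a, ha, rfl⟩ := P.part_surjOn hp
    exact h a ▸ Q.part_mem.2 ha
  exact Finpartition.ext ((parts_subset P Q h).antisymm (parts_subset Q P fun a => (h a).symm))

variable {V β : Type*} [Fintype V] [DecidableEq V]

def labelling (P : Finpartition (univ : Finset V)) (ι : P.parts ↪ β) (v : V) : β :=
  ι ⟨P.part v, P.part_mem.2 (mem_univ v)⟩

lemma labelling_eq_labelling_iff {P : Finpartition (univ : Finset V)} {ι : P.parts ↪ β}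
    {u v : V} : P.labelling ι u = P.labelling ι v ↔ u ∈ P.part v := by
  rw [labelling, labelling, ι.injective.eq_iff, Subtype.mk.injEq,
    P.mem_part_iff_part_eq_part (mem_univ u) (mem_univ v)]

lemma labelling_apply_of_mem {P : Finpartition (univ : Finset V)} (ι : P.parts ↪ β)
    {p : Finset V} (hp : p ∈ P.parts) {v : V} (hv : v ∈ p) : P.labelling ι v = ι ⟨p, hp⟩ := by
  simp only [labelling, P.part_eq_of_mem hp hv]

theorem labelling_injective :
    Function.Injective fun q : Σ P : Finpartition (univ : Finset V), P.parts ↪ β =>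
      q.1.labelling q.2 := by
  rintro ⟨P, ι⟩ ⟨Q, κ⟩ h
  have hPQ : P = Q := ext_part fun v => by
    ext u
    rw [← labelling_eq_labelling_iff (ι := ι), ← labelling_eq_labelling_iff (ι := κ)]
    exact (congrFun h u).congr (congrFun h v)
  subst hPQ
  have hικ : ι = κ := by
    ext ⟨p, hp⟩
    obtain ⟨v, hv⟩ := P.nonempty_of_mem_parts hp
    rw [← labelling_apply_of_mem ι hp hv, ← labelling_apply_of_mem κ hp hv]
    exact congrFun h v
  rw [hικ]

theorem labelling_surjective [DecidableEq β] (f : V → β) :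
    ∃ q : Σ P : Finpartition (univ : Finset V), P.parts ↪ β, q.1.labelling q.2 = f := by
  let P := ofSetoid (Setoid.ker f)
  have hP : ∀ {u v}, u ∈ P.part v ↔ f v = f u := mem_part_ofSetoid_iff_rel
  let rep (p : P.parts) : V := (P.nonempty_of_mem_parts p.2).choose
  have hrep (p : P.parts) : rep p ∈ p.1 := (P.nonempty_of_mem_parts p.2).choose_spec
  refine ⟨⟨P, ⟨fun p => f (rep p), fun p q hpq => Subtype.ext ?_⟩⟩, funext fun v => ?_⟩
  · rw [← P.part_eq_of_mem p.2 (hrep p), ← P.part_eq_of_mem q.2 (hrep q),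
      ← P.mem_part_iff_part_eq_part (mem_univ _) (mem_univ _), hP]
    exact hpq.symm
  · exact (hP.1 (hrep ⟨P.part v, P.part_mem.2 (mem_univ v)⟩)).symm

end Finpartition

namespace SimpleGraph

section Partitions

variable {V : Type} [Fintype V] [DecidableEq V] (G : SimpleGraph V)

def IsIndepPartition (P : Finpartition (univ : Finset V)) : Prop :=
  ∀ p ∈ P.parts, ∀ u ∈ p, ∀ v ∈ p, ¬ G.Adj u v

lemma isIndepPartition_iff_labelling_proper {β : Type*} (P : Finpartition (univ : Finset V))
    (ι : P.parts ↪ β) :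
    G.IsIndepPartition P ↔ ∀ u v, G.Adj u v → P.labelling ι u ≠ P.labelling ι v := by
  refine ⟨fun hP u v hadj hlab => ?_, fun h p hp u hu v hv hadj => ?_⟩
  · exact hP _ (P.part_mem.2 (mem_univ v)) u (Finpartition.labelling_eq_labelling_iff.1 hlab) v
      (P.mem_part_self.2 (mem_univ v)) hadj
  · exact h u v hadj <| by
      rw [Finpartition.labelling_apply_of_mem ι hp hu, Finpartition.labelling_apply_of_mem ι hp hv]

noncomputable def properColoringEquivSigma (β : Type*) [DecidableEq β] :
    {f : V → β // ∀ u v, G.Adj u v → f u ≠ f v} ≃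
      Σ P : {P : Finpartition (univ : Finset V) // G.IsIndepPartition P}, P.1.parts ↪ β :=
  ((Equiv.ofBijective _
    ⟨Finpartition.labelling_injective, Finpartition.labelling_surjective⟩).subtypeEquiv
      fun q => G.isIndepPartition_iff_labelling_proper q.1 q.2).symm.trans
    (Equiv.subtypeSigmaEquiv _ _)

theorem chromaticCount_eq_sum_graphStirling_mul_descFactorial (x : ℕ) :
    chromaticCount G x =
      ∑ k ∈ range (Fintype.card V + 1), graphStirling G k * x.descFactorial k := by
  classical
  have card_parts_mem (P : Finpartition (univ : Finset V)) :
      #P.parts ∈ range (Fintype.card V + 1) :=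
    mem_range_succ_iff.2 (card_univ (α := V) ▸ P.card_parts_le_card)
  rw [chromaticCount, Nat.card_congr (G.properColoringEquivSigma (Fin x)), Nat.card_sigma,
    ← sum_fiberwise_of_maps_to (fun P _ => card_parts_mem P.1)]
  refine sum_congr rfl fun k _ => ?_
  rw [sum_congr rfl fun P hP => by
      rw [Nat.card_eq_fintype_card, Fintype.card_embedding_eq, Fintype.card_fin,
        Fintype.card_coe, (mem_filter.1 hP).2],
    sum_const, smul_eq_mul, graphStirling, Nat.card_eq_fintype_card, ← Fintype.card_subtype]
  exact congrArg (· * _) <| Fintype.card_congr <|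
    (Equiv.subtypeSubtypeEquivSubtypeInter _
      (fun P : Finpartition (univ : Finset V) => #P.parts = k)).trans
      (Equiv.subtypeEquivRight fun _ => and_comm)

theorem chromaticCount_eq_sum_range_of_le {N x : ℕ} (hx : x ≤ N) (hN : N ≤ Fintype.card V) :
    chromaticCount G x = ∑ k ∈ range (N + 1), graphStirling G k * x.descFactorial k := by
  rw [chromaticCount_eq_sum_graphStirling_mul_descFactorial]
  refine (sum_subset (range_subset_range.2 (by omega)) fun k _ hk => ?_).symm
  rw [Nat.descFactorial_eq_zero_iff_lt.2 (by simp only [mem_range] at hk; omega), mul_zero]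

end Partitions

section Chains

variable {α : Type*} (H : SimpleGraph α)

def IsAdjChain {n : ℕ} (f : Fin (n + 1) → α) : Prop :=
  ∀ i : Fin n, H.Adj (f i.castSucc) (f i.succ)

instance [DecidableRel H.Adj] {n : ℕ} : DecidablePred (H.IsAdjChain (n := n)) :=
  fun _ => inferInstanceAs (Decidable (∀ _, _))

variable {H}

lemma isAdjChain_snoc {n : ℕ} {g : Fin (n + 1) → α} {b : α} :
    H.IsAdjChain (Fin.snoc g b : Fin (n + 2) → α) ↔
      H.IsAdjChain g ∧ H.Adj (g (Fin.last n)) b := by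
  simp only [IsAdjChain, Fin.snoc_castSucc]
  rw [Fin.forall_fin_succ']
  simp only [Fin.succ_castSucc, Fin.snoc_castSucc, Fin.succ_last, Fin.snoc_last]

lemma forall_adj_add_one_iff {n : ℕ} {f : Fin (n + 1) → α} :
    (∀ i, H.Adj (f i) (f (i + 1))) ↔ H.IsAdjChain f ∧ H.Adj (f (Fin.last n)) (f 0) := by
  rw [Fin.forall_fin_succ', Fin.last_add_one]
  simp only [Fin.coeSucc_eq_succ, IsAdjChain]

variable (H)

def adjChainSnocEquiv (n : ℕ) (a b : α) :
    {f : Fin (n + 2) → α // H.IsAdjChain f ∧ f 0 = a ∧ f (Fin.last (n + 1)) = b} ≃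
      {g : Fin (n + 1) → α // (H.IsAdjChain g ∧ g 0 = a) ∧ H.Adj (g (Fin.last n)) b} where
  toFun f := ⟨Fin.init f.1, by
    obtain ⟨f, hf, hf0, hfl⟩ := f
    rw [← Fin.snoc_init_self f, hfl, isAdjChain_snoc] at hf
    exact ⟨⟨hf.1, hf0⟩, hf.2⟩⟩
  invFun g := ⟨Fin.snoc g.1 b, isAdjChain_snoc.2 ⟨g.2.1.1, g.2.2⟩,
    (Fin.snoc_castSucc (α := fun _ => α) b g.1 0).trans g.2.1.2, Fin.snoc_last _ _⟩
  left_inv := by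
    rintro ⟨f, hf, hf0, rfl⟩
    exact Subtype.ext (Fin.snoc_init_self f)
  right_inv g := Subtype.ext (Fin.init_snoc (α := fun _ => α) _ _)

variable [Fintype α] [DecidableEq α] [DecidableRel H.Adj] (R : Type*) [Semiring R]

theorem card_adjChain_eq_adjMatrix_pow (n : ℕ) (a b : α) :
    (Fintype.card {f : Fin (n + 1) → α // H.IsAdjChain f ∧ f 0 = a ∧ f (Fin.last n) = b} : R) =
      (H.adjMatrix R ^ n) a b := by
  induction n generalizing b with
  | zero =>
    rw [pow_zero, Matrix.one_apply, Fintype.card_congr ((Equiv.funUnique (Fin 1) α).subtypeEquiv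
      (p := fun f => H.IsAdjChain f ∧ f 0 = a ∧ f (Fin.last 0) = b) (q := fun c => c = a ∧ c = b)
      fun f => by simp [IsAdjChain, Fin.last])]
    split_ifs with hab
    · subst hab
      simp only [and_self, Fintype.card_subtype_eq, Nat.cast_one]
    · rw [Fintype.card_eq_zero_iff.2 ⟨fun c => hab (c.2.1.symm.trans c.2.2)⟩, Nat.cast_zero]
  | succ n ih =>
    rw [Fintype.card_congr (H.adjChainSnocEquiv n a b),
      Fintype.card_subtype_eq_sum_card_fiber _ (fun g => g (Fin.last n)), pow_succ,
      Matrix.mul_apply, Nat.cast_sum]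
    refine Fintype.sum_congr _ _ fun c => ?_
    rw [← ih c, adjMatrix_apply, mul_ite, mul_one, mul_zero]
    split_ifs with hcb
    · exact congrArg _ <| Fintype.card_congr (Equiv.subtypeEquivRight fun g => by aesop)
    · rw [Fintype.card_eq_zero_iff.2 ⟨fun ⟨_, ⟨_, hadj⟩, hc⟩ => hcb (hc ▸ hadj)⟩, Nat.cast_zero]

theorem card_cyclic_adj_eq_trace_adjMatrix_pow (n : ℕ) :
    (Fintype.card {f : Fin (n + 1) → α // ∀ i, H.Adj (f i) (f (i + 1))} : R) =
      (H.adjMatrix R ^ (n + 1)).trace := by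
  rw [Fintype.card_congr (Equiv.subtypeEquivRight fun _ => forall_adj_add_one_iff),
    Fintype.card_subtype_eq_sum_card_fiber _ (fun g => g 0), Nat.cast_sum, Matrix.trace]
  refine Fintype.sum_congr _ _ fun a => ?_
  rw [Matrix.diag_apply, ← card_adjChain_eq_adjMatrix_pow,
    ← Fintype.card_congr (H.adjChainSnocEquiv n a a).symm]
  exact congrArg _ <| Fintype.card_congr (Equiv.subtypeEquivRight fun g => by aesop)

end Chains

section CompleteGraph

variable {V R : Type*} [Fintype V] [DecidableEq V] [CommRing R]

lemma adjMatrix_completeGraph_sq :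
    (completeGraph V).adjMatrix R ^ 2 =
      ((Fintype.card V : R) - 2) • (completeGraph V).adjMatrix R +
        ((Fintype.card V : R) - 1) • 1 := by
  have ones_mul_ones : (Matrix.of 1 : Matrix V V R) * Matrix.of 1 =
      (Fintype.card V : R) • Matrix.of 1 := by
    ext; simp [Matrix.mul_apply]
  rw [adjMatrix_completeGraph_eq_of_one_sub_one, sq, sub_mul, mul_sub, mul_sub, ones_mul_ones,
    mul_one, one_mul, mul_one]
  module

theorem trace_adjMatrix_completeGraph_pow (n : ℕ) :
    ((completeGraph V).adjMatrix R ^ n).trace =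
      ((Fintype.card V : R) - 1) ^ n + (-1) ^ n * ((Fintype.card V : R) - 1) := by
  induction n using Nat.twoStepInduction with
  | zero => simp
  | one => rw [pow_one, trace_adjMatrix]; ring
  | more n ih₀ ih₁ =>
    rw [pow_add, adjMatrix_completeGraph_sq, mul_add, Matrix.mul_smul, ← pow_succ,
      Matrix.mul_smul, mul_one, Matrix.trace_add, Matrix.trace_smul, Matrix.trace_smul, ih₀, ih₁,
      smul_eq_mul, smul_eq_mul]
    ring

end CompleteGraph

lemma forall_cycleGraph_adj_imp_iff {α : Type*} {H : SimpleGraph α} {m : ℕ}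
    {f : Fin (m + 2) → α} :
    (∀ u v, (cycleGraph (m + 2)).Adj u v → H.Adj (f u) (f v)) ↔ ∀ i, H.Adj (f i) (f (i + 1)) := by
  refine ⟨fun hf i => hf _ _ (cycleGraph_adj.2 (Or.inr (add_sub_cancel_left i 1))), ?_⟩
  rintro hf u v (h | h) <;> rw [sub_eq_iff_eq_add] at h <;> rw [h, add_comm]
  · exact (hf v).symm
  · exact hf u

theorem chromaticCount_cycleGraph {R : Type*} [CommRing R] (m x : ℕ) :
    (chromaticCount (cycleGraph (m + 2)) x : R) =
      ((x : R) - 1) ^ (m + 2) + (-1) ^ (m + 2) * ((x : R) - 1) := by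
  have h := (completeGraph (Fin x)).card_cyclic_adj_eq_trace_adjMatrix_pow R (m + 1)
  rw [trace_adjMatrix_completeGraph_pow, Fintype.card_fin] at h
  rw [← h, chromaticCount, Nat.card_eq_fintype_card]
  exact congrArg _ <| Fintype.card_congr <|
    Equiv.subtypeEquivRight fun _ => forall_cycleGraph_adj_imp_iff (H := completeGraph (Fin x))

end SimpleGraph

theorem cycle_graphStirling_four (n : ℕ) (hn : 4 ≤ n) :
    (graphStirling (SimpleGraph.cycleGraph n) 4 : ℚ) =
      ((3 : ℚ) ^ n - 4 * (2 : ℚ) ^ n + (-1 : ℚ) ^ n + 6) / 24 := by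
  obtain ⟨m, rfl⟩ : ∃ m, n = m + 2 := ⟨n - 2, by omega⟩
  have evaluation (x : ℕ) (hx : x ≤ 4) :
      ((x : ℚ) - 1) ^ (m + 2) + (-1) ^ (m + 2) * ((x : ℚ) - 1) =
        ∑ k ∈ range 5, (graphStirling (cycleGraph (m + 2)) k : ℚ) * x.descFactorial k := by
    rw [← chromaticCount_cycleGraph]
    exact_mod_cast (cycleGraph (m + 2)).chromaticCount_eq_sum_range_of_le hx (by simpa using hn)
  have h0 := evaluation 0 (by norm_num)
  have h1 := evaluation 1 (by norm_num)
  have h2 := evaluation 2 (by norm_num)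
  have h3 := evaluation 3 (by norm_num)
  have h4 := evaluation 4 (by norm_num)
  simp only [sum_range_succ, sum_range_zero] at h0 h1 h2 h3 h4
  norm_num [Nat.descFactorial, pow_succ] at h0 h1 h2 h3 h4 ⊢
  linarith
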